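/- For every m ≥ 2 and path-connected metric space X, dTC_m(X) ≤ (dTC(X) + 1)^{m−1} − 1, where dTC = dTC_2. -/

import Mathlib

open MeasureTheory unitInterval

noncomputable section

/-- The path space `P(X) = C([0,1], X)` with the compact-open topology. -/
abbrev PathSp (X : Type*) [TopologicalSpace X] : Type _ := C(unitInterval, X)

/-- The space `B_n(Z)` of probability measures on a metric space `Z` supported on at most
`n` points, as a subspace of the space of probability measures with the Lévy–Prokhorov metric. -/
def Bmeas (n : ℕ) (Z : Type*) [MetricSpace Z] : Type _ :=
  letI : MeasurableSpace Z := borel Z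
  {μ : LevyProkhorov (ProbabilityMeasure Z) //
    ∃ S : Finset Z, S.card ≤ n ∧ (LevyProkhorov.toMeasureEquiv μ : ProbabilityMeasure Z) (↑S : Set Z) = 1}

noncomputable instance (n : ℕ) (Z : Type*) [MetricSpace Z] : TopologicalSpace (Bmeas n Z) :=
  letI : MeasurableSpace Z := borel Z
  haveI : BorelSpace Z := ⟨rfl⟩
  instTopologicalSpaceSubtype

/-- The underlying probability measure of an element of `B_n(Z)`. -/
def Bmeas.meas {n : ℕ} {Z : Type*} [MetricSpace Z] (μ : Bmeas n Z) :
    @ProbabilityMeasure Z (borel Z) :=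
  LevyProkhorov.toMeasureEquiv μ.1

/-- `μ ∈ B_n(Z)` is supported on the set `A`. -/
def DistributedOn {Z : Type*} [MetricSpace Z] {n : ℕ} (μ : Bmeas n Z) (A : Set Z) : Prop :=
  ∃ S : Finset Z, (↑S : Set Z) ⊆ A ∧ Bmeas.meas μ (↑S : Set Z) = 1

/-- The time points `t_j = j/(m-1)`, `j = 0, …, m-1`, in `[0,1]`. -/
def tpt (m : ℕ) (j : Fin m) : unitInterval :=
  Set.projIcc 0 1 zero_le_one ((j : ℝ) / ((m : ℝ) - 1))

/-- A `k`-distributed `m`-navigation algorithm on `X`. -/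
def IsNavAlg (m k : ℕ) {X : Type*} [MetricSpace X]
    (s : (Fin m → X) → Bmeas k (PathSp X)) : Prop :=
  Continuous s ∧ ∀ x : Fin m → X,
    DistributedOn (s x) {φ : PathSp X | ∀ j : Fin m, φ (tpt m j) = x j}

/-- The `m`-th sequential distributional topological complexity. -/
noncomputable def dTC (m : ℕ) (X : Type*) [MetricSpace X] : ℕ∞ :=
  sInf {c : ℕ∞ | ∃ k : ℕ, c = k ∧
    ∃ s : (Fin m → X) → Bmeas (k + 1) (PathSp X), IsNavAlg m (k + 1) s}

/-- A `k`-contraction of `Y` to the point `y₀`. -/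
def IsContr (k : ℕ) {Y : Type*} [MetricSpace Y] (y₀ : Y)
    (H : Y → Bmeas k (PathSp Y)) : Prop :=
  Continuous H ∧ ∀ y : Y,
    DistributedOn (H y) {φ : PathSp Y | φ 0 = y ∧ φ 1 = y₀}

/-- The distributional Lusternik–Schnirelmann category. -/
noncomputable def dcat (Y : Type*) [MetricSpace Y] : ℕ∞ :=
  sInf {c : ℕ∞ | ∃ k : ℕ, c = k ∧
    ∃ (y₀ : Y) (H : Y → Bmeas (k + 1) (PathSp Y)), IsContr (k + 1) y₀ H}

/-- The classical `m`-th sequential topological complexity. -/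
noncomputable def TCcl (m : ℕ) (X : Type*) [TopologicalSpace X] : ℕ∞ :=
  sInf {c : ℕ∞ | ∃ k : ℕ, c = k ∧
    ∃ (U : Fin (k + 1) → Set (Fin m → X)) (s : ∀ i : Fin (k + 1), C(U i, PathSp X)),
      (∀ i, IsOpen (U i)) ∧ (∀ x, ∃ i, x ∈ U i) ∧
      ∀ (i : Fin (k + 1)) (x : U i) (j : Fin m), (s i x) (tpt m j) = (x : Fin m → X) j}

/-!
Induction on `m`. For `x ∈ X^{m+1}`, draw `φ` from an `m`-navigation algorithm at
`(x₀, …, x_{m-1})` and, independently, `ψ` from a 2-navigation algorithm at `(x_{m-1}, x_m)`, and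
concatenate them with the junction at time `(m - 1)/m`, which rescales the time points `j/m` of
the first half to `j/(m - 1)`. If the two algorithms use at most `K` and `L` paths, the result uses
at most `K · L`. Concatenation is 1-Lipschitz on composable pairs, and for finitely supported
measures the Lévy–Prokhorov distance between the images of `μ₁ ⊗ μ₂` and `ν₁ ⊗ ν₂` under such a
map is at most `d(μ₁, ν₁) + d(μ₂, ν₂)`; this gives continuity.
-/

open Metric Set Topology
open scoped ENNReal

section FiniteSupport

variable {Z : Type*} [MeasurableSpace Z] {μ : Measure Z} {S : Finset Z}

theorem measure_le_of_inter_subset (hS : μ (↑S)ᶜ = 0) {A B : Set Z} (h : A ∩ S ⊆ B) :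
    μ A ≤ μ B :=
  (measure_inter_conull hS).symm.le.trans (measure_mono h)

variable [MeasurableSingletonClass Z]

theorem measure_eq_sum_mul_indicator (hS : μ (↑S)ᶜ = 0) (A : Set Z) :
    μ A = ∑ x ∈ S, μ {x} * A.indicator 1 x := by
  classical
  have : A ∩ S = ↑(S.filter (· ∈ A)) := by ext; simp [and_comm]
  rw [← measure_inter_conull hS, this, ← sum_measure_singleton, Finset.sum_filter]
  exact Finset.sum_congr rfl fun x _ => by by_cases hx : x ∈ A <;> simp [hx]

theorem tsum_mul_indicator_eq_measure (hS : μ (↑S)ᶜ = 0) (A : Set Z) :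
    ∑' x, μ {x} * A.indicator 1 x = μ A := by
  rw [tsum_eq_sum fun x hx => by rw [measure_mono_null (singleton_subset_iff.2 hx) hS, zero_mul],
    measure_eq_sum_mul_indicator hS]

end FiniteSupport

theorem LipschitzWith.thickening_preimage_subset {α β : Type*} [PseudoEMetricSpace α]
    [PseudoEMetricSpace β] {f : α → β} (hf : LipschitzWith 1 f) (δ : ℝ) (A : Set β) :
    thickening δ (f ⁻¹' A) ⊆ f ⁻¹' thickening δ A := by
  intro x hx
  obtain ⟨z, hz, hxz⟩ := (mem_thickening_iff_exists_edist_lt _ _).1 hx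
  exact (mem_thickening_iff_exists_edist_lt _ _).2
    ⟨f z, hz, (hf.edist_le_mul x z).trans_lt (by simpa using hxz)⟩

section LevyProkhorovFiniteSupport

variable {Z W : Type*} [MeasurableSpace Z] [MeasurableSingletonClass Z]
  [MeasurableSpace W] [MeasurableSingletonClass W]

theorem sum_mul_measure_prodMk_preimage_comm {μ : Measure Z} {ν : Measure W} {S : Finset Z}
    {T : Finset W} (hS : μ (↑S)ᶜ = 0) (hT : ν (↑T)ᶜ = 0) (A : Set (Z × W)) :
    ∑ φ ∈ S, μ {φ} * ν (Prod.mk φ ⁻¹' A) = ∑ ψ ∈ T, ν {ψ} * μ ((·, ψ) ⁻¹' A) := by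
  calc ∑ φ ∈ S, μ {φ} * ν (Prod.mk φ ⁻¹' A)
      = ∑ φ ∈ S, ∑ ψ ∈ T, μ {φ} * ν {ψ} * A.indicator 1 (φ, ψ) :=
        Finset.sum_congr rfl fun φ _ => by
          rw [measure_eq_sum_mul_indicator hT, Finset.mul_sum]
          exact Finset.sum_congr rfl fun ψ _ => by rw [mul_assoc]; rfl
    _ = ∑ ψ ∈ T, ν {ψ} * μ ((·, ψ) ⁻¹' A) := by
        rw [Finset.sum_comm]
        refine Finset.sum_congr rfl fun ψ _ => ?_
        rw [measure_eq_sum_mul_indicator hS, Finset.mul_sum]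
        exact Finset.sum_congr rfl fun φ _ => by rw [mul_left_comm, ← mul_assoc]; rfl

variable [PseudoEMetricSpace Z] [PseudoEMetricSpace W]

theorem sum_mul_measure_le_sum_mul_measure_thickening_add {μ ν : Measure Z} {S : Finset Z}
    (hS : μ (↑S)ᶜ = 0) {δ : ℝ≥0∞} (h : levyProkhorovEDist μ ν < δ) {ι : Type*} (s : Finset ι)
    (w : ι → ℝ≥0∞) (hw : ∑ i ∈ s, w i ≤ 1) (E : ι → Set Z) :
    ∑ i ∈ s, w i * μ (E i) ≤ ∑ i ∈ s, w i * ν (thickening δ.toReal (E i)) + δ := by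
  have hE : ∀ E, μ E ≤ ν (thickening δ.toReal E) + δ := fun E =>
    calc μ E = μ (E ∩ S) := (measure_inter_conull hS).symm
      _ ≤ ν (thickening δ.toReal (E ∩ S)) + δ := left_measure_le_of_levyProkhorovEDist_lt h
          (S.finite_toSet.subset inter_subset_right).measurableSet
      _ ≤ ν (thickening δ.toReal E) + δ := by
          gcongr
          exact thickening_subset_of_subset _ inter_subset_left
  calc ∑ i ∈ s, w i * μ (E i) ≤ ∑ i ∈ s, w i * (ν (thickening δ.toReal (E i)) + δ) := by
        gcongr with i; exact hE _
    _ = ∑ i ∈ s, w i * ν (thickening δ.toReal (E i)) + (∑ i ∈ s, w i) * δ := by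
        rw [Finset.sum_mul, ← Finset.sum_add_distrib]; simp only [mul_add]
    _ ≤ ∑ i ∈ s, w i * ν (thickening δ.toReal (E i)) + δ := by
        gcongr; exact mul_le_of_le_one_left' hw

theorem sum_mul_measure_prodMk_preimage_le {μ₁ ν₁ : Measure Z} {μ₂ ν₂ : Measure W}
    [IsProbabilityMeasure μ₁] [IsProbabilityMeasure ν₂] {S₁ T₁ : Finset Z} {S₂ T₂ : Finset W}
    (hS₁ : μ₁ (↑S₁)ᶜ = 0) (hS₂ : μ₂ (↑S₂)ᶜ = 0) (hT₁ : ν₁ (↑T₁)ᶜ = 0) (hT₂ : ν₂ (↑T₂)ᶜ = 0)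
    {δ₁ δ₂ : ℝ≥0∞} (h₁ : levyProkhorovEDist μ₁ ν₁ < δ₁) (h₂ : levyProkhorovEDist μ₂ ν₂ < δ₂)
    (hδ₁ : δ₁ ≠ ∞) (hδ₂ : δ₂ ≠ ∞) (A : Set (Z × W)) :
    ∑ φ ∈ S₁, μ₁ {φ} * μ₂ (Prod.mk φ ⁻¹' A) ≤
      ∑ φ ∈ T₁, ν₁ {φ} * ν₂ (Prod.mk φ ⁻¹' thickening (δ₁ + δ₂).toReal A) + (δ₁ + δ₂) := by
  set C := thickening δ₂.toReal A
  set D := thickening δ₁.toReal C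
  have hμ₁ : ∑ φ ∈ S₁, μ₁ {φ} ≤ 1 := sum_measure_singleton (μ := μ₁) ▸ prob_le_one
  have hν₂ : ∑ ψ ∈ T₂, ν₂ {ψ} ≤ 1 := sum_measure_singleton (μ := ν₂) ▸ prob_le_one
  calc ∑ φ ∈ S₁, μ₁ {φ} * μ₂ (Prod.mk φ ⁻¹' A)
      ≤ ∑ φ ∈ S₁, μ₁ {φ} * ν₂ (Prod.mk φ ⁻¹' C) + δ₂ := by
        refine (sum_mul_measure_le_sum_mul_measure_thickening_add hS₂ h₂ S₁ _ hμ₁ _).trans ?_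
        gcongr with φ
        exact (LipschitzWith.prodMk_left φ).thickening_preimage_subset _ _
    _ = ∑ ψ ∈ T₂, ν₂ {ψ} * μ₁ ((·, ψ) ⁻¹' C) + δ₂ := by
        rw [sum_mul_measure_prodMk_preimage_comm hS₁ hT₂]
    _ ≤ ∑ ψ ∈ T₂, ν₂ {ψ} * ν₁ ((·, ψ) ⁻¹' D) + δ₁ + δ₂ := by
        gcongr
        refine (sum_mul_measure_le_sum_mul_measure_thickening_add hS₁ h₁ T₂ _ hν₂ _).trans ?_
        gcongr with ψ
        exact (LipschitzWith.prodMk_right ψ).thickening_preimage_subset _ _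
    _ = ∑ φ ∈ T₁, ν₁ {φ} * ν₂ (Prod.mk φ ⁻¹' D) + (δ₁ + δ₂) := by
        rw [← sum_mul_measure_prodMk_preimage_comm hT₁ hT₂, add_assoc]
    _ ≤ ∑ φ ∈ T₁, ν₁ {φ} * ν₂ (Prod.mk φ ⁻¹' thickening (δ₁ + δ₂).toReal A) + (δ₁ + δ₂) := by
        gcongr with φ
        rw [ENNReal.toReal_add hδ₁ hδ₂]
        exact thickening_thickening_subset _ _ _

end LevyProkhorovFiniteSupport

section ProdMapAtoms

variable {Z W Y : Type*} [MeasurableSpace Z] [MeasurableSpace W] [MeasurableSingletonClass W]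
  [MeasurableSpace Y]

/-- For finitely supported `μ₁` and `μ₂`, the image of `μ₁ ⊗ μ₂` under `F`. Building it from the
atoms needs no measurability of `F`. -/
def prodMapAtoms (F : Z × W → Y) (μ₁ : Measure Z) (μ₂ : Measure W) : Measure Y :=
  Measure.sum fun p : Z × W => (μ₁ {p.1} * μ₂ {p.2}) • Measure.dirac (F p)

variable {F : Z × W → Y} {μ₁ ν₁ : Measure Z} {μ₂ ν₂ : Measure W} {S₁ T₁ : Finset Z}
  {S₂ T₂ : Finset W}

theorem prodMapAtoms_apply (hS₁ : μ₁ (↑S₁)ᶜ = 0) (hS₂ : μ₂ (↑S₂)ᶜ = 0) {B : Set Y}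
    (hB : MeasurableSet B) :
    prodMapAtoms F μ₁ μ₂ B = ∑ φ ∈ S₁, μ₁ {φ} * μ₂ (Prod.mk φ ⁻¹' (F ⁻¹' B)) := by
  rw [prodMapAtoms, Measure.sum_apply _ hB, ENNReal.tsum_prod']
  simp only [Measure.smul_apply, Measure.dirac_apply' _ hB, smul_eq_mul, mul_assoc,
    ENNReal.tsum_mul_left]
  rw [tsum_eq_sum fun φ hφ => by
    rw [measure_mono_null (singleton_subset_iff.2 hφ) hS₁, zero_mul]]
  exact Finset.sum_congr rfl fun φ _ => congrArg _ (tsum_mul_indicator_eq_measure hS₂ _)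

theorem isProbabilityMeasure_prodMapAtoms [MeasurableSingletonClass Z]
    [IsProbabilityMeasure μ₁] [IsProbabilityMeasure μ₂] (hS₁ : μ₁ (↑S₁)ᶜ = 0)
    (hS₂ : μ₂ (↑S₂)ᶜ = 0) : IsProbabilityMeasure (prodMapAtoms F μ₁ μ₂) :=
  ⟨by simp [prodMapAtoms_apply hS₁ hS₂ MeasurableSet.univ,
    (prob_compl_eq_zero_iff S₁.measurableSet).1 hS₁]⟩

theorem prodMapAtoms_compl_image_eq_zero [MeasurableSingletonClass Y] [DecidableEq Y]
    (hS₁ : μ₁ (↑S₁)ᶜ = 0) (hS₂ : μ₂ (↑S₂)ᶜ = 0) :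
    prodMapAtoms F μ₁ μ₂ (↑((S₁ ×ˢ S₂).image F))ᶜ = 0 := by
  rw [prodMapAtoms_apply hS₁ hS₂ (Finset.measurableSet _).compl]
  refine Finset.sum_eq_zero fun φ hφ => ?_
  refine mul_eq_zero_of_right _ (measure_mono_null ?_ hS₂)
  intro ψ hψ hψS
  exact hψ (Finset.mem_image_of_mem F (Finset.mem_product.2 ⟨hφ, hψS⟩))

variable [PseudoMetricSpace Z] [PseudoMetricSpace W] [PseudoMetricSpace Y]
  [OpensMeasurableSpace Y] {M : Set (Z × W)}

theorem prodMapAtoms_apply_le [MeasurableSingletonClass Z] (hF : LipschitzOnWith 1 F M)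
    [IsProbabilityMeasure μ₁] [IsProbabilityMeasure ν₂] (hS₁ : μ₁ (↑S₁)ᶜ = 0) (hS₂ : μ₂ (↑S₂)ᶜ = 0)
    (hT₁ : ν₁ (↑T₁)ᶜ = 0) (hT₂ : ν₂ (↑T₂)ᶜ = 0) (hSM : (S₁ : Set Z) ×ˢ (S₂ : Set W) ⊆ M)
    (hTM : (T₁ : Set Z) ×ˢ (T₂ : Set W) ⊆ M) {δ₁ δ₂ : ℝ≥0∞} (h₁ : levyProkhorovEDist μ₁ ν₁ < δ₁)
    (h₂ : levyProkhorovEDist μ₂ ν₂ < δ₂) (hδ₁ : δ₁ ≠ ∞) (hδ₂ : δ₂ ≠ ∞) {B : Set Y}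
    (hB : MeasurableSet B) :
    prodMapAtoms F μ₁ μ₂ B ≤
      prodMapAtoms F ν₁ ν₂ (thickening (δ₁ + δ₂).toReal B) + (δ₁ + δ₂) := by
  set A := F ⁻¹' B ∩ M
  rw [prodMapAtoms_apply hS₁ hS₂ hB, prodMapAtoms_apply hT₁ hT₂ isOpen_thickening.measurableSet]
  calc ∑ φ ∈ S₁, μ₁ {φ} * μ₂ (Prod.mk φ ⁻¹' (F ⁻¹' B))
      ≤ ∑ φ ∈ S₁, μ₁ {φ} * μ₂ (Prod.mk φ ⁻¹' A) :=
        Finset.sum_le_sum fun φ hφ => mul_le_mul_right (measure_le_of_inter_subset hS₂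
          fun ψ ⟨hψB, hψS⟩ => ⟨hψB, hSM ⟨hφ, hψS⟩⟩) _
    _ ≤ ∑ φ ∈ T₁, ν₁ {φ} * ν₂ (Prod.mk φ ⁻¹' thickening (δ₁ + δ₂).toReal A) + (δ₁ + δ₂) :=
        sum_mul_measure_prodMk_preimage_le hS₁ hS₂ hT₁ hT₂ h₁ h₂ hδ₁ hδ₂ A
    _ ≤ ∑ φ ∈ T₁, ν₁ {φ} * ν₂ (Prod.mk φ ⁻¹' (F ⁻¹' thickening (δ₁ + δ₂).toReal B))
          + (δ₁ + δ₂) := by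
        refine add_le_add (Finset.sum_le_sum fun φ hφ =>
          mul_le_mul_right (measure_le_of_inter_subset hT₂ ?_) _) le_rfl
        rintro ψ ⟨hψA, hψT⟩
        obtain ⟨q, ⟨hqB, hqM⟩, hq⟩ := mem_thickening_iff.1 hψA
        exact mem_thickening_iff.2
          ⟨F q, hqB, (hF.dist_le_mul _ (hTM ⟨hφ, hψT⟩) q hqM).trans_lt (by simpa using hq)⟩

theorem levyProkhorovEDist_prodMapAtoms_le [MeasurableSingletonClass Z]
    (hF : LipschitzOnWith 1 F M)
    [IsProbabilityMeasure μ₁] [IsProbabilityMeasure μ₂] [IsProbabilityMeasure ν₁]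
    [IsProbabilityMeasure ν₂] (hS₁ : μ₁ (↑S₁)ᶜ = 0) (hS₂ : μ₂ (↑S₂)ᶜ = 0)
    (hT₁ : ν₁ (↑T₁)ᶜ = 0) (hT₂ : ν₂ (↑T₂)ᶜ = 0) (hSM : (S₁ : Set Z) ×ˢ (S₂ : Set W) ⊆ M)
    (hTM : (T₁ : Set Z) ×ˢ (T₂ : Set W) ⊆ M) :
    levyProkhorovEDist (prodMapAtoms F μ₁ μ₂) (prodMapAtoms F ν₁ ν₂) ≤
      levyProkhorovEDist μ₁ ν₁ + levyProkhorovEDist μ₂ ν₂ := by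
  have := isProbabilityMeasure_prodMapAtoms (F := F) hS₁ hS₂
  have := isProbabilityMeasure_prodMapAtoms (F := F) hT₁ hT₂
  refine levyProkhorovEDist_le_of_forall_le _ _ _ fun ε B hε hε_top hB => ?_
  obtain ⟨δ₁, h₁, δ₂, h₂, hδ⟩ := ENNReal.exists_add_lt_of_add_lt hε
  have hδ_top : δ₁ + δ₂ ≠ ∞ := (hδ.trans hε_top).ne
  exact meas_le_of_le_of_forall_le_meas_thickening_add _ _ hδ.le
    (prodMapAtoms_apply_le hF hS₁ hS₂ hT₁ hT₂ hSM hTM h₁ h₂ (ENNReal.add_ne_top.1 hδ_top).1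
      (ENNReal.add_ne_top.1 hδ_top).2 hB)

end ProdMapAtoms

theorem MeasureTheory.ProbabilityMeasure.toMeasure_compl_eq_zero_iff {Ω : Type*}
    [MeasurableSpace Ω] (P : ProbabilityMeasure Ω) {s : Set Ω} (hs : MeasurableSet s) :
    (P : Measure Ω) sᶜ = 0 ↔ P s = 1 := by
  rw [prob_compl_eq_zero_iff hs, ← ProbabilityMeasure.ennreal_coeFn_eq_coeFn_toMeasure,
    ENNReal.coe_eq_one]

theorem borelSpace_borel (Z : Type*) [TopologicalSpace Z] : @BorelSpace Z _ (borel Z) :=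
  @BorelSpace.mk Z _ (borel Z) rfl

theorem continuous_of_edist_le_add {α β γ δ : Type*} [TopologicalSpace α] [PseudoEMetricSpace β]
    [PseudoEMetricSpace γ] [PseudoEMetricSpace δ] {f : α → β} {g : α → γ} {h : α → δ}
    (hf : Continuous f) (hg : Continuous g)
    (hfgh : ∀ x y, edist (h x) (h y) ≤ edist (f x) (f y) + edist (g x) (g y)) : Continuous h := by
  refine continuous_iff_continuousAt.2 fun x => tendsto_iff_edist_tendsto_0.2 ?_
  have hlim : Filter.Tendsto (fun y => edist (f y) (f x) + edist (g y) (g x)) (𝓝 x) (𝓝 0) := by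
    simpa using ((hf.tendsto x).edist (tendsto_const_nhds (x := f x))).add
      ((hg.tendsto x).edist (tendsto_const_nhds (x := g x)))
  exact tendsto_of_tendsto_of_tendsto_of_le_of_le tendsto_const_nhds hlim (fun _ => zero_le)
    fun y => hfgh y x

section Bmeas

attribute [local instance] borel borelSpace_borel

variable {Z W Y : Type*} [MetricSpace Z] [MetricSpace W] [MetricSpace Y] {n K L : ℕ}

theorem Bmeas.exists_finset (μ : Bmeas n Z) :
    ∃ S : Finset Z, S.card ≤ n ∧ (μ.meas : Measure Z) (↑S)ᶜ = 0 := by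
  obtain ⟨S, hS, h⟩ := μ.2
  exact ⟨S, hS, (ProbabilityMeasure.toMeasure_compl_eq_zero_iff _ S.measurableSet).2 h⟩

theorem DistributedOn.exists_finset {μ : Bmeas n Z} {A : Set Z} (h : DistributedOn μ A) :
    ∃ S : Finset Z, ↑S ⊆ A ∧ (μ.meas : Measure Z) (↑S)ᶜ = 0 := by
  obtain ⟨S, hS, h⟩ := h
  exact ⟨S, hS, (ProbabilityMeasure.toMeasure_compl_eq_zero_iff _ S.measurableSet).2 h⟩

theorem DistributedOn.mono {μ : Bmeas n Z} {A B : Set Z} (h : DistributedOn μ A) (hAB : A ⊆ B) :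
    DistributedOn μ B :=
  let ⟨S, hS, h⟩ := h
  ⟨S, hS.trans hAB, h⟩

def Bmeas.map₂ (F : Z × W → Y) (μ : Bmeas K Z) (ν : Bmeas L W) : Bmeas (K * L) Y :=
  ⟨.ofMeasure ⟨prodMapAtoms F μ.meas ν.meas, by
    obtain ⟨S₁, -, h₁⟩ := μ.exists_finset
    obtain ⟨S₂, -, h₂⟩ := ν.exists_finset
    exact isProbabilityMeasure_prodMapAtoms h₁ h₂⟩, by
    classical
    obtain ⟨S₁, hS₁, h₁⟩ := μ.exists_finset
    obtain ⟨S₂, hS₂, h₂⟩ := ν.exists_finset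
    refine ⟨(S₁ ×ˢ S₂).image F, Finset.card_image_le.trans ?_, ?_⟩
    · rw [Finset.card_product]
      exact Nat.mul_le_mul hS₁ hS₂
    · exact (ProbabilityMeasure.toMeasure_compl_eq_zero_iff _ (Finset.measurableSet _)).1
        (prodMapAtoms_compl_image_eq_zero h₁ h₂)⟩

theorem DistributedOn.map₂ {F : Z × W → Y} {μ : Bmeas K Z} {ν : Bmeas L W} {A : Set Z}
    {B : Set W} (hμ : DistributedOn μ A) (hν : DistributedOn ν B) :
    DistributedOn (μ.map₂ F ν) (F '' A ×ˢ B) := by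
  classical
  obtain ⟨S₁, hS₁A, h₁⟩ := hμ.exists_finset
  obtain ⟨S₂, hS₂B, h₂⟩ := hν.exists_finset
  refine ⟨(S₁ ×ˢ S₂).image F, ?_, ?_⟩
  · rw [Finset.coe_image, Finset.coe_product]
    exact image_mono (prod_mono hS₁A hS₂B)
  · exact (ProbabilityMeasure.toMeasure_compl_eq_zero_iff _ (Finset.measurableSet _)).1
      (prodMapAtoms_compl_image_eq_zero h₁ h₂)

theorem Bmeas.edist_map₂_le {F : Z × W → Y} {M : Set (Z × W)} (hF : LipschitzOnWith 1 F M)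
    {μ μ' : Bmeas K Z} {ν ν' : Bmeas L W} {A A' : Set Z} {B B' : Set W}
    (hμ : DistributedOn μ A) (hν : DistributedOn ν B) (hμ' : DistributedOn μ' A')
    (hν' : DistributedOn ν' B') (hAB : A ×ˢ B ⊆ M) (hAB' : A' ×ˢ B' ⊆ M) :
    edist (μ.map₂ F ν).1 (μ'.map₂ F ν').1 ≤ edist μ.1 μ'.1 + edist ν.1 ν'.1 := by
  obtain ⟨S₁, hS₁A, h₁⟩ := hμ.exists_finset
  obtain ⟨S₂, hS₂B, h₂⟩ := hν.exists_finset
  obtain ⟨T₁, hT₁A, h₁'⟩ := hμ'.exists_finset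
  obtain ⟨T₂, hT₂B, h₂'⟩ := hν'.exists_finset
  exact levyProkhorovEDist_prodMapAtoms_le hF h₁ h₂ h₁' h₂'
    ((prod_mono hS₁A hS₂B).trans hAB) ((prod_mono hT₁A hT₂B).trans hAB')

end Bmeas

section Concat

variable {X : Type*}

def glue [TopologicalSpace X] (a : ℝ) (φ ψ : PathSp X) (t : I) : X :=
  if (t : ℝ) ≤ a then φ (projIcc 0 1 zero_le_one (t / a))
  else ψ (projIcc 0 1 zero_le_one ((t - a) / (1 - a)))

theorem continuous_glue [TopologicalSpace X] {a : ℝ} (ha : 0 < a) {φ ψ : PathSp X}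
    (h : φ 1 = ψ 0) : Continuous (glue a φ ψ) := by
  refine Continuous.if_le (by fun_prop) (by fun_prop) continuous_subtype_val continuous_const ?_
  intro t ht
  simp [ht, ha.ne', h]

open Classical in
def concatAt [TopologicalSpace X] {a : ℝ} (ha : 0 < a) (p : PathSp X × PathSp X) : PathSp X :=
  if h : p.1 1 = p.2 0 then ⟨glue a p.1 p.2, continuous_glue ha h⟩ else .const _ (p.1 0)

theorem concatAt_apply [TopologicalSpace X] {a : ℝ} (ha : 0 < a) {φ ψ : PathSp X}
    (h : φ 1 = ψ 0) (t : I) : concatAt ha (φ, ψ) t = glue a φ ψ t := by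
  simp [concatAt, h]

theorem lipschitzOnWith_concatAt [PseudoMetricSpace X] {a : ℝ} (ha : 0 < a) :
    LipschitzOnWith 1 (concatAt ha) {p : PathSp X × PathSp X | p.1 1 = p.2 0} := by
  refine LipschitzOnWith.of_dist_le_mul fun p hp q hq => ?_
  rw [NNReal.coe_one, one_mul, ContinuousMap.dist_le dist_nonneg]
  intro t
  rw [concatAt_apply ha hp, concatAt_apply ha hq, glue, glue]
  split_ifs
  · exact (ContinuousMap.dist_apply_le_dist _).trans (le_max_left _ _)
  · exact (ContinuousMap.dist_apply_le_dist _).trans (le_max_right _ _)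

end Concat

section Navigation

attribute [local instance] borel borelSpace_borel

variable {X : Type*} [MetricSpace X]

theorem coe_tpt {m : ℕ} (hm : 2 ≤ m) (j : Fin m) : (tpt m j : ℝ) = j / (m - 1) := by
  have hm' : (1 : ℝ) < m := by exact_mod_cast hm
  have hj : (j : ℝ) ≤ m - 1 := by
    have := j.isLt
    rw [le_sub_iff_add_le]; exact_mod_cast this
  exact congrArg Subtype.val (projIcc_of_mem _ ⟨by positivity, (div_le_one (by linarith)).2 hj⟩)

theorem tpt_last {m : ℕ} (hm : 2 ≤ m) : tpt m ⟨m - 1, by omega⟩ = 1 := by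
  have hm' : (1 : ℝ) < m := by exact_mod_cast hm
  ext
  rw [coe_tpt hm, Fin.val_mk, Nat.cast_sub (by omega), Nat.cast_one, div_self (by linarith)]
  rfl

theorem tpt_two_zero : tpt 2 0 = 0 := by simp [tpt]

theorem tpt_two_one : tpt 2 1 = 1 := by norm_num [tpt]

theorem sub_one_div_pos_of_two_le {m : ℕ} (hm : 2 ≤ m) : 0 < ((m : ℝ) - 1) / m := by
  have hm' : (2 : ℝ) ≤ m := by exact_mod_cast hm
  exact div_pos (by linarith) (by linarith)

theorem concatAt_apply_tpt {m : ℕ} (hm : 2 ≤ m) {x : Fin (m + 1) → X} {φ ψ : PathSp X}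
    (hφ : ∀ j : Fin m, φ (tpt m j) = x j.castSucc) (hψ : ψ 1 = x (Fin.last m)) (h : φ 1 = ψ 0)
    (j : Fin (m + 1)) : concatAt (sub_one_div_pos_of_two_le hm) (φ, ψ) (tpt (m + 1) j) = x j := by
  have hm' : (2 : ℝ) ≤ m := by exact_mod_cast hm
  have ht : (tpt (m + 1) j : ℝ) = j / m := by rw [coe_tpt (by omega)]; push_cast; ring
  rw [concatAt_apply _ h, glue, ht]
  rcases Fin.eq_castSucc_or_eq_last j with ⟨i, rfl⟩ | rfl
  · have hi : (i : ℝ) ≤ m - 1 := by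
      have := i.isLt
      rw [le_sub_iff_add_le]; exact_mod_cast this
    have hti : (i / m) / ((m - 1) / m) = (i / (m - 1) : ℝ) := by
      field_simp
    rw [Fin.val_castSucc, if_pos (div_le_div_of_nonneg_right hi (by linarith)), ← hφ i, hti]
    rfl
  · have ha : ((m : ℝ) - 1) / m < 1 := (div_lt_one (by linarith)).2 (by linarith)
    rw [Fin.val_last, div_self (by linarith), if_neg ha.not_ge,
      div_self (sub_ne_zero.2 ha.ne'), projIcc_right]
    exact hψ

theorem IsNavAlg.exists_succ {m K L : ℕ} (hm : 2 ≤ m) {s : (Fin m → X) → Bmeas K (PathSp X)}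
    (hs : IsNavAlg m K s) {s₂ : (Fin 2 → X) → Bmeas L (PathSp X)} (hs₂ : IsNavAlg 2 L s₂) :
    ∃ s' : (Fin (m + 1) → X) → Bmeas (K * L) (PathSp X), IsNavAlg (m + 1) (K * L) s' := by
  let back : (Fin (m + 1) → X) → Fin 2 → X := fun x => ![x ⟨m - 1, by omega⟩, x (Fin.last m)]
  have hgood : ∀ x, ∀ p ∈ {φ : PathSp X | ∀ j, φ (tpt m j) = Fin.init x j} ×ˢ
      {ψ : PathSp X | ∀ j, ψ (tpt 2 j) = back x j},
      p.1 1 = p.2 0 ∧ ∀ j, concatAt (sub_one_div_pos_of_two_le hm) p (tpt (m + 1) j) = x j := by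
    rintro x ⟨φ, ψ⟩ ⟨hφ, hψ⟩
    have h : φ 1 = ψ 0 := by
      rw [← tpt_last hm, hφ, ← tpt_two_zero, hψ]
      rfl
    exact ⟨h, concatAt_apply_tpt hm hφ (by simpa [tpt_two_one, back] using hψ 1) h⟩
  refine ⟨fun x => (s (Fin.init x)).map₂ (concatAt (sub_one_div_pos_of_two_le hm)) (s₂ (back x)),
    ?_, fun x => ?_⟩
  · have hfront : Continuous fun x : Fin (m + 1) → X => (s (Fin.init x)).1 :=
      continuous_subtype_val.comp (hs.1.comp (continuous_pi fun _ => continuous_apply _))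
    have hback : Continuous fun x => (s₂ (back x)).1 :=
      continuous_subtype_val.comp (hs₂.1.comp (continuous_pi (Fin.forall_fin_two.2
        ⟨continuous_apply _, continuous_apply _⟩)))
    refine continuous_induced_rng.2 (continuous_of_edist_le_add hfront hback fun x y => ?_)
    exact Bmeas.edist_map₂_le (lipschitzOnWith_concatAt (X := X) (sub_one_div_pos_of_two_le hm))
      (hs.2 (Fin.init x)) (hs₂.2 (back x)) (hs.2 (Fin.init y)) (hs₂.2 (back y))
      (fun p hp => (hgood x p hp).1) (fun p hp => (hgood y p hp).1)
  · exact ((hs.2 _).map₂ (hs₂.2 _)).mono (image_subset_iff.2 fun p hp => (hgood x p hp).2)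

end Navigation

theorem exists_isNavAlg_pow {X : Type*} [MetricSpace X] {k : ℕ}
    {s₂ : (Fin 2 → X) → Bmeas (k + 1) (PathSp X)} (hs₂ : IsNavAlg 2 (k + 1) s₂) {m : ℕ}
    (hm : 2 ≤ m) : ∃ s : (Fin m → X) → Bmeas ((k + 1) ^ (m - 1)) (PathSp X),
      IsNavAlg m ((k + 1) ^ (m - 1)) s := by
  induction m, hm using Nat.le_induction with
  | base => rw [Nat.add_one_sub_one, pow_one]; exact ⟨s₂, hs₂⟩
  | succ m hm ih =>
    obtain ⟨s, hs⟩ := ih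
    rw [Nat.add_sub_cancel, ← Nat.sub_add_cancel (by omega : 1 ≤ m), pow_succ,
      Nat.sub_add_cancel (by omega : 1 ≤ m)]
    exact hs.exists_succ hm hs₂

theorem dTC_le_of_isNavAlg {m n : ℕ} {X : Type*} [MetricSpace X] (hn : 1 ≤ n)
    {s : (Fin m → X) → Bmeas n (PathSp X)} (hs : IsNavAlg m n s) : dTC m X ≤ (n - 1 : ℕ) := by
  obtain ⟨k, rfl⟩ : ∃ k, n = k + 1 := ⟨n - 1, by omega⟩
  exact sInf_le ⟨k, by simp, s, hs⟩

theorem exists_isNavAlg_of_dTC_eq {m k : ℕ} {X : Type*} [MetricSpace X] (h : dTC m X = k) :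
    ∃ s : (Fin m → X) → Bmeas (k + 1) (PathSp X), IsNavAlg m (k + 1) s := by
  rw [dTC] at h
  obtain ⟨k', hk', hs⟩ := h ▸ csInf_mem (nonempty_iff_ne_empty.2 fun he => by simp [he] at h)
  obtain rfl : k = k' := by exact_mod_cast hk'
  exact hs

theorem dTC_le_pow_general (m : ℕ) (hm : 2 ≤ m) (X : Type) [MetricSpace X] :
    dTC m X ≤ (dTC 2 X + 1) ^ (m - 1) - 1 := by
  induction h : dTC 2 X using ENat.recTopCoe with
  | top => simp [ENat.top_pow (by omega : m - 1 ≠ 0)]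
  | coe k =>
    obtain ⟨s₂, hs₂⟩ := exists_isNavAlg_of_dTC_eq h
    obtain ⟨s, hs⟩ := exists_isNavAlg_pow hs₂ hm
    calc dTC m X ≤ ((k + 1) ^ (m - 1) - 1 : ℕ) :=
          dTC_le_of_isNavAlg (Nat.one_le_pow _ _ k.succ_pos) hs
      _ = ((k : ℕ∞) + 1) ^ (m - 1) - 1 := by push_cast [ENat.natCast_sub]; rfl

/-- For every `m ≥ 2` and path-connected metric space `X`,
`dTC_m(X) ≤ (dTC(X) + 1)^{m-1} - 1`, where `dTC = dTC_2`. -/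
theorem dTC_le_pow (m : ℕ) (hm : 2 ≤ m) (X : Type) [MetricSpace X] [PathConnectedSpace X] :
    dTC m X ≤ (dTC 2 X + 1) ^ (m - 1) - 1 :=
  dTC_le_pow_general m hm X
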